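/- Let G be a finite connected simple graph and v a vertex of G. In the game Vicious Trap, the first player starting from v loses (i.e., the second player has a winning strategy) if and only if v is contained in every maximum-cardinality independent set of G. -/

import Mathlib

/-!
Vicious Trap: a token moves along edges of `G` to previously unvisited,
undeleted vertices; after moving, the mover may delete any subset of the
vertices he could have just moved to instead (neighbors of the previous
position, unvisited and undeleted, other than the new position).  A player
who cannot move loses.  The state is a pair (history of visited vertices,
newest first; set of deleted vertices).  The first player moves at
histories of odd length.
-/

variable {V : Type*}

/-- A move to `w` is legal from history `h` with deleted set `D` if `w` is
adjacent to the current vertex, unvisited and undeleted. -/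
def VTrapLegal (G : SimpleGraph V) (h : List V) (D : Set V) (w : V) : Prop :=
  ∃ c, h.head? = some c ∧ G.Adj c w ∧ w ∉ h ∧ w ∉ D

open Classical in
/-- The evolution of Vicious Trap: a strategy chooses, from the current state,
a vertex to move to together with a set of vertices to delete; only the legal
part of the deletion request (alternative legal moves, other than the chosen
vertex) is executed.  If the chosen move is illegal the state freezes. -/
noncomputable def vtrapPlay (G : SimpleGraph V) (σ τ : List V → Set V → V × Set V) (v : V) :
    ℕ → List V × Set V
  | 0 => ([v], ∅)
  | n + 1 =>
    let s := vtrapPlay G σ τ v n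
    let m := if s.1.length % 2 = 1 then σ s.1 s.2 else τ s.1 s.2
    if VTrapLegal G s.1 s.2 m.1 then
      (m.1 :: s.1, s.2 ∪ (m.2 ∩ {x | VTrapLegal G s.1 s.2 x ∧ x ≠ m.1}))
    else s

/-- The first player has a winning strategy in Vicious Trap. -/
def VTrapFirstWins (G : SimpleGraph V) (v : V) : Prop :=
  ∃ σ, ∀ τ, ∃ n : ℕ,
    (vtrapPlay G σ τ v n).1.length % 2 = 0 ∧
    ¬ VTrapLegal G (vtrapPlay G σ τ v n).1 (vtrapPlay G σ τ v n).2
      ((τ (vtrapPlay G σ τ v n).1 (vtrapPlay G σ τ v n).2).1)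

/-- The second player has a winning strategy in Vicious Trap. -/
def VTrapSecondWins (G : SimpleGraph V) (v : V) : Prop :=
  ∃ τ, ∀ σ, ∃ n : ℕ,
    (vtrapPlay G σ τ v n).1.length % 2 = 1 ∧
    ¬ VTrapLegal G (vtrapPlay G σ τ v n).1 (vtrapPlay G σ τ v n).2
      ((σ (vtrapPlay G σ τ v n).1 (vtrapPlay G σ τ v n).2).1)

/-- `I` is an independent set of `G`. -/
def IsIndep (G : SimpleGraph V) (I : Set V) : Prop :=
  ∀ a ∈ I, ∀ b ∈ I, ¬ G.Adj a b

/-- `I` is a maximum-cardinality independent set of `G`. -/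
def IsMaxIndep (G : SimpleGraph V) (I : Set V) : Prop :=
  IsIndep G I ∧ ∀ J : Set V, IsIndep G J → J.ncard ≤ I.ncard


/-!
Call the current vertex `c` *trapped* when it lies in every maximum independent subset of
`T = {c} ∪ {available vertices}`.  A trapped mover, whatever `w` he moves to and whatever
neighbours `D` of `c` he deletes, leaves `w` untrapped: for a maximum independent `I` of `T`,
`I \ {c}` is maximum in the new arena `T \ ({c} ∪ D)` and misses the neighbour `w` of `c`.
An untrapped mover chooses a maximum independent `I` of `T` avoiding `c` with as few
neighbours of `c` as possible; `I` must contain a neighbour `u` of `c`, and moving to `u` while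
deleting the neighbours of `c` outside `I` traps `u`, since a maximum set of the new arena
avoiding `u` would be a maximum set of `T` with fewer neighbours of `c`.  The game is finite,
so the player who starts trapped is the one who eventually cannot move.
-/

def IsIndepIn (G : SimpleGraph V) (T I : Set V) : Prop := I ⊆ T ∧ IsIndep G I

def IsMaxIndepIn (G : SimpleGraph V) (T I : Set V) : Prop :=
  IsIndepIn G T I ∧ ∀ J, IsIndepIn G T J → J.ncard ≤ I.ncard

def MemEveryMaxIndepIn (G : SimpleGraph V) (T : Set V) (c : V) : Prop :=
  ∀ I, IsMaxIndepIn G T I → c ∈ I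

section IndepIn

variable {G : SimpleGraph V} {T I : Set V} {c : V}

theorem memEveryMaxIndepIn_univ_iff :
    MemEveryMaxIndepIn G Set.univ c ↔ ∀ I, IsMaxIndep G I → c ∈ I := by
  have hmax : ∀ I, IsMaxIndepIn G Set.univ I ↔ IsMaxIndep G I := fun I =>
    ⟨fun h => ⟨h.1.2, fun J hJ => h.2 J ⟨J.subset_univ, hJ⟩⟩,
      fun h => ⟨⟨I.subset_univ, h.1⟩, fun J hJ => h.2 J hJ.2⟩⟩
  simp only [MemEveryMaxIndepIn, hmax]

theorem IsMaxIndepIn.diff_singleton (hI : IsMaxIndepIn G T I) (hT : MemEveryMaxIndepIn G T c)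
    {D : Set V} (hD : D ⊆ G.neighborSet c) :
    IsMaxIndepIn G (T \ insert c D) (I \ {c}) := by
  have hcI : c ∈ I := hT I hI
  refine ⟨⟨fun x ⟨hxI, hxc⟩ => ⟨hI.1.1 hxI, ?_⟩, fun a ha b hb => hI.1.2 a ha.1 b hb.1⟩, ?_⟩
  · rintro (rfl | hxD)
    · exact hxc rfl
    · exact hI.1.2 c hcI x hxI (hD hxD)
  intro J hJ
  have hJT : IsIndepIn G T J := ⟨hJ.1.trans Set.sdiff_subset, hJ.2⟩
  have hcJ : c ∉ J := fun h => (hJ.1 h).2 (Set.mem_insert c D)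
  have hJI : J.ncard < I.ncard := (hI.2 J hJT).lt_of_ne fun h =>
    hcJ (hT J ⟨hJT, fun K hK => h ▸ hI.2 K hK⟩)
  rw [Set.ncard_sdiff_singleton_of_mem hcI]
  omega

variable [Finite V]

theorem exists_isMaxIndepIn (G : SimpleGraph V) (T : Set V) : ∃ I, IsMaxIndepIn G T I := by
  have hempty : IsIndepIn G T ∅ := ⟨T.empty_subset, fun a ha => ha.elim⟩
  obtain ⟨I, hI, hmax⟩ := Set.Finite.exists_maximalFor Set.ncard {I | IsIndepIn G T I}
    (Set.toFinite _) ⟨∅, hempty⟩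
  exact ⟨I, hI, fun J hJ => le_of_not_gt fun hlt => hlt.not_ge (hmax hJ hlt.le)⟩

theorem MemEveryMaxIndepIn.not_of_adj (hT : MemEveryMaxIndepIn G T c) {w : V}
    (hcw : G.Adj c w) {D : Set V} (hD : D ⊆ G.neighborSet c) :
    ¬ MemEveryMaxIndepIn G (T \ insert c D) w := by
  obtain ⟨I, hI⟩ := exists_isMaxIndepIn G T
  intro hw
  exact hI.1.2 c (hT I hI) w (hw _ (hI.diff_singleton hT hD)).1 hcw

theorem IsMaxIndepIn.exists_adj_mem (hI : IsMaxIndepIn G T I) (hc : c ∈ T) (hcI : c ∉ I) :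
    ∃ u ∈ I, G.Adj c u := by
  by_contra! hno
  have hins : IsIndepIn G T (insert c I) := by
    refine ⟨Set.insert_subset hc hI.1.1, ?_⟩
    rintro a (rfl | ha) b (rfl | hb)
    · exact G.irrefl
    · exact hno b hb
    · exact fun h => hno a ha h.symm
    · exact hI.1.2 a ha b hb
  have := hI.2 _ hins
  rw [Set.ncard_insert_of_notMem hcI] at this
  omega

theorem exists_adj_memEveryMaxIndepIn (hc : c ∈ T) (hT : ¬ MemEveryMaxIndepIn G T c) :
    ∃ u ∈ T, G.Adj c u ∧ ∃ D ⊆ T ∩ G.neighborSet c, u ∉ D ∧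
      MemEveryMaxIndepIn G (T \ insert c D) u := by
  set N := G.neighborSet c
  simp only [MemEveryMaxIndepIn, not_forall, exists_prop] at hT
  obtain ⟨I, ⟨hI, hcI⟩, hmin⟩ := Set.Finite.exists_minimalFor (fun I => (I ∩ N).ncard)
    {I | IsMaxIndepIn G T I ∧ c ∉ I} (Set.toFinite _) hT
  obtain ⟨u, huI, hcu⟩ := hI.exists_adj_mem hc hcI
  refine ⟨u, hI.1.1 huI, hcu, (T ∩ N) \ I, Set.sdiff_subset, fun h => h.2 huI, ?_⟩
  intro J hJ
  by_contra huJ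
  have hIJ : I.ncard ≤ J.ncard := by
    refine hJ.2 I ⟨fun x hx => ⟨hI.1.1 hx, ?_⟩, hI.1.2⟩
    rintro (rfl | hxD)
    exacts [hcI hx, hxD.2 hx]
  have hJT : IsIndepIn G T J := ⟨hJ.1.1.trans Set.sdiff_subset, hJ.1.2⟩
  have hJmax : IsMaxIndepIn G T J := ⟨hJT, fun K hK => (hI.2 K hK).trans hIJ⟩
  have hcJ : c ∉ J := fun h => (hJ.1.1 h).2 (Set.mem_insert c _)
  have hJN : J ∩ N ⊂ I ∩ N := by
    refine ⟨fun x ⟨hxJ, hxN⟩ => ⟨?_, hxN⟩, fun h => huJ (h ⟨huI, hcu⟩).1⟩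
    obtain ⟨hxT, hxD⟩ := hJ.1.1 hxJ
    by_contra hxI
    exact hxD (Or.inr ⟨⟨hxT, hxN⟩, hxI⟩)
  exact (Set.ncard_lt_ncard hJN).not_ge (hmin ⟨hJmax, hcJ⟩ (Set.ncard_lt_ncard hJN).le)

end IndepIn

def vtrapAvail (s : List V × Set V) : Set V := {x | x ∉ s.1 ∧ x ∉ s.2}

open Classical in
noncomputable def vtrapStep (G : SimpleGraph V) (s : List V × Set V) (m : V × Set V) :
    List V × Set V :=
  if VTrapLegal G s.1 s.2 m.1 then
    (m.1 :: s.1, s.2 ∪ (m.2 ∩ {x | VTrapLegal G s.1 s.2 x ∧ x ≠ m.1}))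
  else s

def VTrapTrapped (G : SimpleGraph V) (s : List V × Set V) (c : V) : Prop :=
  MemEveryMaxIndepIn G (insert c (vtrapAvail s)) c

open Classical in
noncomputable def vtrapStrategy (G : SimpleGraph V) (v : V) (h : List V) (D : Set V) :
    V × Set V :=
  if hm : ∃ m : V × Set V, VTrapLegal G h D m.1 ∧ VTrapTrapped G (vtrapStep G (h, D) m) m.1
  then hm.choose else (v, ∅)

theorem vtrapPlay_succ (G : SimpleGraph V) (σ τ : List V → Set V → V × Set V) (v : V)
    (n : ℕ) :
    vtrapPlay G σ τ v (n + 1) = vtrapStep G (vtrapPlay G σ τ v n)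
      (if (vtrapPlay G σ τ v n).1.length % 2 = 1
        then σ (vtrapPlay G σ τ v n).1 (vtrapPlay G σ τ v n).2
        else τ (vtrapPlay G σ τ v n).1 (vtrapPlay G σ τ v n).2) := rfl

theorem insert_vtrapAvail_init (v : V) : insert v (vtrapAvail ([v], ∅)) = Set.univ := by
  ext x
  simp [vtrapAvail, em]

section Game

variable {G : SimpleGraph V} {s : List V × Set V} {c : V} {m : V × Set V}

theorem vtrapStep_of_legal (hm : VTrapLegal G s.1 s.2 m.1) :
    vtrapStep G s m = (m.1 :: s.1, s.2 ∪ (m.2 ∩ {x | VTrapLegal G s.1 s.2 x ∧ x ≠ m.1})) :=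
  if_pos hm

theorem vtrapStep_of_not_legal (hm : ¬ VTrapLegal G s.1 s.2 m.1) : vtrapStep G s m = s :=
  if_neg hm

theorem vtrapLegal_iff (hc : s.1.head? = some c) {w : V} :
    VTrapLegal G s.1 s.2 w ↔ G.Adj c w ∧ w ∈ vtrapAvail s := by
  simp [VTrapLegal, hc, vtrapAvail]

theorem insert_vtrapAvail_vtrapStep (hc : s.1.head? = some c) (hm : VTrapLegal G s.1 s.2 m.1) :
    insert m.1 (vtrapAvail (vtrapStep G s m)) =
      insert c (vtrapAvail s) \ insert c (m.2 ∩ {x | VTrapLegal G s.1 s.2 x ∧ x ≠ m.1}) := by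
  have hcs : c ∈ s.1 := List.mem_of_mem_head? hc
  obtain ⟨hcm, hms, hmD⟩ := (vtrapLegal_iff hc).1 hm
  ext x
  simp only [vtrapStep_of_legal hm, vtrapAvail, vtrapLegal_iff hc, Set.mem_insert_iff,
    Set.mem_sdiff, Set.mem_ofPred_eq, List.mem_cons, Set.mem_union, Set.mem_inter_iff]
  by_cases hx : x = m.1
  · subst hx
    simp [hms, hmD, G.ne_of_adj hcm |>.symm]
  · have : x = c → x ∈ s.1 := fun h => h ▸ hcs
    tauto

theorem VTrapTrapped.not_vtrapStep [Finite V] (hc : s.1.head? = some c)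
    (hT : VTrapTrapped G s c) (hm : VTrapLegal G s.1 s.2 m.1) :
    ¬ VTrapTrapped G (vtrapStep G s m) m.1 := by
  rw [VTrapTrapped, insert_vtrapAvail_vtrapStep hc hm]
  refine hT.not_of_adj ((vtrapLegal_iff hc).1 hm).1 fun x hx => ?_
  exact ((vtrapLegal_iff hc).1 hx.2.1).1

theorem exists_vtrapStep_trapped [Finite V] (hc : s.1.head? = some c)
    (hT : ¬ VTrapTrapped G s c) :
    ∃ m : V × Set V, VTrapLegal G s.1 s.2 m.1 ∧ VTrapTrapped G (vtrapStep G s m) m.1 := by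
  have mem_avail : ∀ {x}, x ∈ insert c (vtrapAvail s) → G.Adj c x → x ∈ vtrapAvail s :=
    fun hx hcx => hx.resolve_left (G.ne_of_adj hcx).symm
  obtain ⟨u, huT, hcu, D, hD, huD, hu⟩ := exists_adj_memEveryMaxIndepIn (Set.mem_insert c _) hT
  have hlegal : VTrapLegal G s.1 s.2 u := (vtrapLegal_iff hc).2 ⟨hcu, mem_avail huT hcu⟩
  have hDlegal : D ∩ {x | VTrapLegal G s.1 s.2 x ∧ x ≠ u} = D := by
    refine Set.inter_eq_left.2 fun x hx => ⟨(vtrapLegal_iff hc).2 ⟨(hD hx).2, ?_⟩, ?_⟩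
    · exact mem_avail (hD hx).1 (hD hx).2
    · rintro rfl
      exact huD hx
  refine ⟨(u, D), hlegal, ?_⟩
  rwa [VTrapTrapped, insert_vtrapAvail_vtrapStep hc hlegal, hDlegal]

end Game

section Play

variable [Finite V] {G : SimpleGraph V}

theorem vtrapStrategy_legal {s : List V × Set V} {c : V} (v : V) (hc : s.1.head? = some c)
    (hT : ¬ VTrapTrapped G s c) : VTrapLegal G s.1 s.2 (vtrapStrategy G v s.1 s.2).1 := by
  have hm := exists_vtrapStep_trapped hc hT
  rw [vtrapStrategy, dif_pos hm]
  exact hm.choose_spec.1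

variable {s : ℕ → List V × Set V} {mv : ℕ → V × Set V}

/-- `turn` marks the history lengths at which the player following `vtrapStrategy` moves. -/
theorem vtrapStrategy_invariant (hs : ∀ n, s (n + 1) = vtrapStep G (s n) (mv n))
    {turn : ℕ → Prop} (hturn : ∀ k, turn (k + 1) ↔ ¬ turn k) (v : V)
    (hmv : ∀ n, turn (s n).1.length → mv n = vtrapStrategy G v (s n).1 (s n).2)
    (h0 : ∃ c, (s 0).1.head? = some c ∧ (turn (s 0).1.length ↔ ¬ VTrapTrapped G (s 0) c))
    (n : ℕ) :
    ∃ c, (s n).1.head? = some c ∧ (turn (s n).1.length ↔ ¬ VTrapTrapped G (s n) c) := by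
  induction n with
  | zero => exact h0
  | succ n ih =>
    obtain ⟨c, hc, hturn_n⟩ := ih
    by_cases hlegal : VTrapLegal G (s n).1 (s n).2 (mv n).1
    · have hlen : (vtrapStep G (s n) (mv n)).1.length = (s n).1.length + 1 := by
        simp [vtrapStep_of_legal hlegal]
      refine ⟨(mv n).1, by simp [hs, vtrapStep_of_legal hlegal], ?_⟩
      rw [hs, hlen, hturn, hturn_n, not_not]
      by_cases hT : VTrapTrapped G (s n) c
      · exact iff_of_true hT (hT.not_vtrapStep hc hlegal)
      · have hm := exists_vtrapStep_trapped hc hT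
        rw [hmv n (hturn_n.2 hT), vtrapStrategy, dif_pos hm]
        exact iff_of_false hT (not_not.2 hm.choose_spec.2)
    · rw [hs, vtrapStep_of_not_legal hlegal]
      exact ⟨c, hc, hturn_n⟩

theorem exists_not_vtrapLegal (hs : ∀ n, s (n + 1) = vtrapStep G (s n) (mv n))
    (h0 : (s 0).1.Nodup) : ∃ n, ¬ VTrapLegal G (s n).1 (s n).2 (mv n).1 := by
  have := Fintype.ofFinite V
  by_contra! hlegal
  have hgrow : ∀ n, (s n).1.Nodup ∧ (s n).1.length = (s 0).1.length + n := by
    intro n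
    induction n with
    | zero => exact ⟨h0, rfl⟩
    | succ n ih =>
      obtain ⟨c, -, -, hmem, -⟩ := hlegal n
      rw [hs, vtrapStep_of_legal (hlegal n)]
      exact ⟨ih.1.cons hmem, by simp [ih.2]; omega⟩
  have hlen := (hgrow (Fintype.card V + 1)).1.length_le_card
  rw [(hgrow _).2] at hlen
  omega

end Play

theorem vtrap_firstLoses_iff_mem_every_maxIndep_general [Fintype V]
    (G : SimpleGraph V) (v : V) :
    VTrapSecondWins G v ↔ ∀ I : Set V, IsMaxIndep G I → v ∈ I := by
  rw [← memEveryMaxIndepIn_univ_iff, ← insert_vtrapAvail_init v]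
  change VTrapSecondWins G v ↔ VTrapTrapped G ([v], ∅) v
  constructor
  · rintro ⟨τ, hτ⟩
    by_contra hT
    obtain ⟨n, hodd, hillegal⟩ := hτ (vtrapStrategy G v)
    obtain ⟨c, hc, hturn⟩ := vtrapStrategy_invariant (vtrapPlay_succ G _ τ v)
      (turn := fun k => k % 2 = 1) (by omega) v (fun _ h => if_pos h)
      ⟨v, rfl, iff_of_true rfl hT⟩ n
    exact hillegal (vtrapStrategy_legal v hc (hturn.1 hodd))
  · intro hT
    refine ⟨vtrapStrategy G v, fun σ => ?_⟩
    have hplay := vtrapPlay_succ G σ (vtrapStrategy G v) v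
    obtain ⟨n, hillegal⟩ := exists_not_vtrapLegal hplay (List.nodup_singleton v)
    obtain ⟨c, hc, hturn⟩ := vtrapStrategy_invariant hplay
      (turn := fun k => k % 2 = 0) (by omega) v (fun _ h => if_neg (by omega))
      ⟨v, rfl, iff_of_false (by simp [vtrapPlay]) (not_not.2 hT)⟩ n
    rcases Nat.mod_two_eq_zero_or_one (vtrapPlay G σ (vtrapStrategy G v) v n).1.length with h | h
    · rw [if_neg (by omega)] at hillegal
      exact absurd (vtrapStrategy_legal v hc (hturn.1 h)) hillegal
    · rw [if_pos h] at hillegal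
      exact ⟨n, h, hillegal⟩

/-- On a finite connected simple graph, the first player loses
Vicious Trap from `v` (i.e. the second player has a winning strategy) if and
only if `v` is contained in every maximum independent set of `G`. -/
theorem vtrap_firstLoses_iff_mem_every_maxIndep [Fintype V]
    (G : SimpleGraph V) (hG : G.Connected) (v : V) :
    VTrapSecondWins G v ↔ ∀ I : Set V, IsMaxIndep G I → v ∈ I :=
  vtrap_firstLoses_iff_mem_every_maxIndep_general G v
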